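/- arXiv:1812.09986 — 2 statements merged into one kernel-verified Lean document; each statement's English description precedes it below -/
import Mathlib

section
/- Let A be a finite-dimensional nil evolution algebra over a field F of characteristic ≠ 2. Then A is fourth power-associative (i.e. x²·x² = (x²·x)·x for all x ∈ A) if and only if A is a Jordan algebra (i.e. (x²·y)·x = x²·(y·x) for all x, y ∈ A). -/
/-- Principal powers: `ppow m a k = a^(k+1)`. -/
def ppow {F A : Type*} [Field F] [AddCommGroup A] [Module F A]
    (m : A →ₗ[F] A →ₗ[F] A) (a : A) : ℕ → A
  | 0 => a
  | k + 1 => m (ppow m a k) a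

/-!
Write `e_a² = ∑_b ω_ab e_b` over a natural basis. Since `e_a^(k+2) = ω_aa^k e_a²`, nilpotency of
`e_a` forces `ω_aa = 0`. For `u v = 0` the squares of `u + v` and `u - v` agree, so fourth
power-associativity at these two points splits into an even and an odd identity. Taking for `u, v`
two basis vectors, or `e_b + e_c` and `e_a`, these identities give `A² A² = 0`, `ω_ab ω_ba = 0` and
`ω_ab ω_bc e_c² = 0`, that is `(A² A) A = 0`. Hence both sides of the Jordan identity vanish;
conversely, the Jordan identity at `y = x` is fourth power-associativity.
-/

open Module

def IsNaturalBasis {R A ι : Type*} [CommSemiring R] [AddCommMonoid A] [Module R A]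
    (m : A →ₗ[R] A →ₗ[R] A) (e : Basis ι R A) : Prop :=
  ∀ i j, i ≠ j → m (e i) (e j) = 0

noncomputable def sqCoeff {R A ι : Type*} [CommSemiring R] [AddCommMonoid A] [Module R A]
    (m : A →ₗ[R] A →ₗ[R] A) (e : Basis ι R A) (a b : ι) : R :=
  e.repr (m (e a) (e a)) b

theorem fourthPowerAssoc_polarize {F A : Type*} [Field F] [AddCommGroup A] [Module F A]
    (m : A →ₗ[F] A →ₗ[F] A) (h2 : (2 : F) ≠ 0)
    (h4 : ∀ x, m (m x x) (m x x) = m (m (m x x) x) x) {u v : A} (huv : m u v = 0)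
    (hvu : m v u = 0) :
    m (m u u + m v v) (m u u + m v v) =
        m (m (m u u + m v v) u) u + m (m (m u u + m v v) v) v ∧
      m (m (m u u + m v v) u) v + m (m (m u u + m v v) v) u = 0 := by
  have hsq : ∀ s : F, s * s = 1 → m (u + s • v) (u + s • v) = m u u + m v v := by
    intro s hs
    simp only [map_add, map_smul, LinearMap.add_apply, LinearMap.smul_apply, huv, hvu,
      smul_zero, add_zero, zero_add, smul_smul, hs, one_smul]
  have hp := h4 (u + (1 : F) • v)
  have hm := h4 (u + (-1 : F) • v)
  rw [hsq 1 (by norm_num)] at hp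
  rw [hsq (-1) (by norm_num)] at hm
  simp only [map_add, map_smul, LinearMap.add_apply, LinearMap.smul_apply] at hp hm ⊢
  constructor
  · apply smul_right_injective A h2
    linear_combination (norm := module) hp + hm
  · apply smul_right_injective A h2
    linear_combination (norm := module) hm - hp

namespace IsNaturalBasis

section CommSemiring

variable {R A ι : Type*} [CommSemiring R] [AddCommMonoid A] [Module R A]
  {m : A →ₗ[R] A →ₗ[R] A} {e : Basis ι R A}

theorem repr_sq_basis (a b : ι) : e.repr (m (e a) (e a)) b = sqCoeff m e a b := rfl

theorem mul_basis (he : IsNaturalBasis m e) (y : A) (j : ι) :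
    m y (e j) = e.repr y j • m (e j) (e j) := by
  refine LinearMap.congr_fun (e.ext (f₁ := m.flip (e j))
    (f₂ := (e.coord j).smulRight (m (e j) (e j))) fun i => ?_) y
  obtain rfl | hij := eq_or_ne i j
  · simp
  · simp [he i j hij, Finsupp.single_eq_of_ne' hij]

theorem mul_comm (he : IsNaturalBasis m e) (x y : A) : m x y = m y x := by
  refine LinearMap.congr_fun₂ (LinearMap.ext_basis e e (B' := m.flip) fun i j => ?_) x y
  obtain rfl | hij := eq_or_ne i j
  · rfl
  · simp [he i j hij, he j i hij.symm]

theorem mul_eq_sum [Fintype ι] (he : IsNaturalBasis m e) (x y : A) :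
    m x y = ∑ a, (e.repr x a * e.repr y a) • m (e a) (e a) := by
  conv_lhs => rw [← e.sum_repr y]
  rw [map_sum]
  refine Finset.sum_congr rfl fun a _ => ?_
  rw [map_smul, he.mul_basis, smul_smul, _root_.mul_comm]

theorem sq_basis_mul_basis (he : IsNaturalBasis m e) (a b : ι) :
    m (m (e a) (e a)) (e b) = sqCoeff m e a b • m (e b) (e b) :=
  he.mul_basis _ b

theorem mul_mul_basis_basis (he : IsNaturalBasis m e) (y : A) (j k : ι) :
    m (m y (e j)) (e k) = (e.repr y j * sqCoeff m e j k) • m (e k) (e k) := by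
  rw [he.mul_basis y j, map_smul, LinearMap.smul_apply, he.mul_basis _ k, smul_smul, sqCoeff]

theorem mul_mul_basis_self_eq_zero (he : IsNaturalBasis m e) {j : ι}
    (hj : sqCoeff m e j j = 0) (y : A) : m (m y (e j)) (e j) = 0 := by
  rw [he.mul_mul_basis_basis, hj, mul_zero, zero_smul]

theorem mul_mul_mul_eq_zero_of_sq_mul_sq [Fintype ι] (he : IsNaturalBasis m e)
    (h : ∀ a b, m (m (e a) (e a)) (m (e b) (e b)) = 0) (x x' y z : A) :
    m (m x x') (m y z) = 0 := by
  simp only [he.mul_eq_sum x x', he.mul_eq_sum y z, map_sum, map_smul, LinearMap.sum_apply,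
    LinearMap.smul_apply, h, smul_zero, Finset.sum_const_zero]

theorem mul_mul_mul_eq_zero_of_sq_mul_mul [Fintype ι] (he : IsNaturalBasis m e)
    (h : ∀ a b c, m (m (m (e a) (e a)) (e b)) (e c) = 0) (x x' y z : A) :
    m (m (m x x') y) z = 0 := by
  have hsq : ∀ a, m ∘ₗ m (m (e a) (e a)) = 0 := fun a => LinearMap.ext_basis e e (h a)
  simp only [he.mul_eq_sum x x', map_sum, map_smul, LinearMap.sum_apply, LinearMap.smul_apply]
  refine Finset.sum_eq_zero fun a _ => ?_
  rw [← LinearMap.comp_apply m, hsq, LinearMap.zero_apply, LinearMap.zero_apply, smul_zero]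

end CommSemiring

section Field

variable {F A ι : Type*} [Field F] [AddCommGroup A] [Module F A]
  {m : A →ₗ[F] A →ₗ[F] A} {e : Basis ι F A}

theorem ppow_basis_succ (he : IsNaturalBasis m e) (i : ι) (k : ℕ) :
    ppow m (e i) (k + 1) = sqCoeff m e i i ^ k • m (e i) (e i) := by
  induction k with
  | zero => rw [pow_zero, one_smul]; rfl
  | succ k ih =>
    rw [ppow, ih, map_smul, LinearMap.smul_apply, he.mul_basis, repr_sq_basis, smul_smul,
      ← pow_succ]

theorem sqCoeff_self_eq_zero (he : IsNaturalBasis m e) {i : ι}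
    (hnil : ∃ k, ppow m (e i) k = 0) : sqCoeff m e i i = 0 := by
  obtain ⟨_ | k, hk⟩ := hnil
  · exact absurd hk (e.ne_zero i)
  rw [he.ppow_basis_succ] at hk
  rcases smul_eq_zero.mp hk with hw | hsq
  · exact eq_zero_of_pow_eq_zero hw
  · rw [← repr_sq_basis, hsq, map_zero, Finsupp.coe_zero, Pi.zero_apply]

variable (he : IsNaturalBasis m e) (h2 : (2 : F) ≠ 0) (hdiag : ∀ i, sqCoeff m e i i = 0)
  (h4 : ∀ x, m (m x x) (m x x) = m (m (m x x) x) x)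
include he h2 hdiag h4

theorem sq_mul_sq_basis_eq_zero (a b : ι) : m (m (e a) (e a)) (m (e b) (e b)) = 0 := by
  have hself : ∀ a, m (m (e a) (e a)) (m (e a) (e a)) = 0 := fun a => by
    rw [h4, he.mul_mul_basis_self_eq_zero (hdiag a)]
  obtain rfl | hab := eq_or_ne a b
  · exact hself a
  have h := (fourthPowerAssoc_polarize m h2 h4 (he a b hab) (he b a hab.symm)).1
  rw [he.mul_mul_basis_self_eq_zero (hdiag a), he.mul_mul_basis_self_eq_zero (hdiag b),
    add_zero] at h
  simp only [map_add, LinearMap.add_apply, hself, he.mul_comm (m (e b) (e b)), add_zero,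
    zero_add, ← two_smul F] at h
  exact (smul_eq_zero.mp h).resolve_left h2

theorem sqCoeff_mul_sqCoeff_swap_eq_zero (a b : ι) : sqCoeff m e a b * sqCoeff m e b a = 0 := by
  obtain rfl | hab := eq_or_ne a b
  · rw [hdiag, zero_mul]
  have h := (fourthPowerAssoc_polarize m h2 h4 (he a b hab) (he b a hab.symm)).2
  rw [he.mul_mul_basis_basis, he.mul_mul_basis_basis] at h
  have hb := congrArg (fun v => e.repr v b) h
  simp only [map_add, map_smul, Finsupp.add_apply, Finsupp.smul_apply, smul_eq_mul,
    repr_sq_basis, hdiag, map_zero, Finsupp.coe_zero, Pi.zero_apply, zero_add, add_zero,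
    mul_zero] at hb
  exact mul_self_eq_zero.mp (by linear_combination sqCoeff m e b a * hb)

theorem sqCoeff_mul_smul_add_sqCoeff_mul_smul_eq_zero {a b c : ι} (hab : a ≠ b) (hac : a ≠ c)
    (hbc : b ≠ c) :
    (sqCoeff m e a b * sqCoeff m e b c) • m (e c) (e c) +
      (sqCoeff m e a c * sqCoeff m e c b) • m (e b) (e b) = 0 := by
  have huv : m (e b + e c) (e a) = 0 := by
    rw [map_add, LinearMap.add_apply, he b a hab.symm, he c a hac.symm, add_zero]
  have hvu : m (e a) (e b + e c) = 0 := by rw [map_add, he a b hab, he a c hac, add_zero]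
  have h := (fourthPowerAssoc_polarize m h2 h4 huv hvu).1
  have hsq : m (e b + e c) (e b + e c) = m (e b) (e b) + m (e c) (e c) := by
    simp only [map_add, LinearMap.add_apply, he b c hbc, he c b hbc.symm, add_zero, zero_add]
  rw [he.mul_mul_basis_self_eq_zero (hdiag a), add_zero, hsq] at h
  simp only [map_add, LinearMap.add_apply, he.sq_mul_sq_basis_eq_zero h2 hdiag h4,
    map_smul, LinearMap.smul_apply, he.sq_basis_mul_basis, hdiag, smul_smul, zero_smul, smul_zero,
    add_zero, zero_add] at h
  linear_combination (norm := module) -h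
    - he.sqCoeff_mul_sqCoeff_swap_eq_zero h2 hdiag h4 b c • m (e b) (e b)
    - he.sqCoeff_mul_sqCoeff_swap_eq_zero h2 hdiag h4 c b • m (e c) (e c)

theorem sq_mul_basis_mul_basis_eq_zero (a b c : ι) :
    m (m (m (e a) (e a)) (e b)) (e c) = 0 := by
  rw [he.sq_basis_mul_basis, map_smul, LinearMap.smul_apply, he.sq_basis_mul_basis, smul_smul]
  obtain rfl | hab := eq_or_ne a b
  · rw [hdiag, zero_mul, zero_smul]
  obtain rfl | hbc := eq_or_ne b c
  · rw [hdiag, mul_zero, zero_smul]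
  obtain rfl | hac := eq_or_ne a c
  · rw [he.sqCoeff_mul_sqCoeff_swap_eq_zero h2 hdiag h4, zero_smul]
  rcases mul_eq_zero.mp (he.sqCoeff_mul_sqCoeff_swap_eq_zero h2 hdiag h4 b c) with hbc' | hcb
  · rw [hbc', mul_zero, zero_smul]
  · simpa only [hcb, mul_zero, zero_smul, add_zero] using
      he.sqCoeff_mul_smul_add_sqCoeff_mul_smul_eq_zero h2 hdiag h4 hab hac hbc

end Field

end IsNaturalBasis

theorem nil_evolution_algebra_fourth_pa_iff_jordan_general
    (F : Type*) [Field F] (h2 : (2 : F) ≠ 0)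
    (A : Type*) [AddCommGroup A] [Module F A]
    (m : A →ₗ[F] A →ₗ[F] A)
    (hev : ∃ (n : ℕ) (e : Module.Basis (Fin n) F A),
      ∀ i j : Fin n, i ≠ j → m (e i) (e j) = 0)
    (hnil : ∀ a : A, ∃ k : ℕ, ppow m a k = 0) :
    (∀ x : A, m (m x x) (m x x) = m (m (m x x) x) x) ↔
      (∀ x y : A, m (m (m x x) y) x = m (m x x) (m y x)) := by
  obtain ⟨n, e, he⟩ := hev
  replace he : IsNaturalBasis m e := he
  have hdiag : ∀ i, sqCoeff m e i i = 0 := fun i => he.sqCoeff_self_eq_zero (hnil (e i))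
  refine ⟨fun h4 x y => ?_, fun hJ x => (hJ x x).symm⟩
  rw [he.mul_mul_mul_eq_zero_of_sq_mul_mul (he.sq_mul_basis_mul_basis_eq_zero h2 hdiag h4),
    he.mul_mul_mul_eq_zero_of_sq_mul_sq (he.sq_mul_sq_basis_eq_zero h2 hdiag h4)]

/-- a finite-dimensional nil evolution algebra over a field of
characteristic ≠ 2 is fourth power-associative iff it is a Jordan algebra. -/
theorem nil_evolution_algebra_fourth_pa_iff_jordan
    (F : Type*) [Field F] (h2 : (2 : F) ≠ 0)
    (A : Type*) [AddCommGroup A] [Module F A]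
    (m : A →ₗ[F] A →ₗ[F] A) (hcomm : ∀ x y : A, m x y = m y x)
    (hev : ∃ (n : ℕ) (e : Module.Basis (Fin n) F A),
      ∀ i j : Fin n, i ≠ j → m (e i) (e j) = 0)
    (hnil : ∀ a : A, ∃ k : ℕ, ppow m a k = 0) :
    (∀ x : A, m (m x x) (m x x) = m (m (m x x) x) x) ↔
      (∀ x y : A, m (m (m x x) y) x = m (m x x) (m y x)) :=
  nil_evolution_algebra_fourth_pa_iff_jordan_general F h2 A m hev hnil
end

section
/- Let A be a finite-dimensional nil power-associative evolution algebra over a field F of characteristic ≠ 2 which is not associative. Then A has nil-index 4, i.e. x⁴ = 0 for every x ∈ A (principal powers) and there exists a ∈ A with a³ ≠ 0; moreover A⁴ = 0 (where A¹ = A and A^{k+1} is the linear span of products u·v, u ∈ A^k, v ∈ A), and there exists y ∈ A with y ∉ A² such that y·z = 0 for every z ∈ A². -/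
/-- Plenary subspace powers: `spow m k = A^(k+1)`. -/
def spow {F A : Type*} [Field F] [AddCommGroup A] [Module F A]
    (m : A →ₗ[F] A →ₗ[F] A) : ℕ → Submodule F A
  | 0 => ⊤
  | k + 1 => Submodule.span F {x | ∃ u ∈ spow m k, ∃ v : A, x = m u v}


/-! Write `cᵢ = eᵢ²`; in an evolution algebra `x · e_p` is the `e_p`-coordinate of `x` times `c_p`.
Nilness of `eᵢ` forces `eᵢ³ = 0`, because `eᵢ³` is a multiple of `eᵢ²`. Both `(eᵢ + eⱼ)²` and
`(eᵢ - eⱼ)²` equal `cᵢ + cⱼ`, so adding the two instances of `x²x² = x⁴` kills the odd terms and,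
as `2 ≠ 0`, gives `A²A² = 0`, hence `x⁴ = 0`. Applied to `e_p + e_r` and `e_p ± e_q + e_r`,
`x⁴ = 0` yields relations between the products `(c_q e_p) e_r` which, each product being a
multiple of a single `cᵢ`, force them all to vanish: `A⁴ = 0`. Non-associativity now means
`A²A ≠ 0`, i.e. `c_k eᵢ ≠ 0` for some `k, i`; then `(e_k + eᵢ)³ - (e_k - eᵢ)³ = 2 c_k eᵢ ≠ 0`,
and `A⁴ = 0` makes the `e_k`-coordinate of every `c_q` vanish, so `e_k ∉ A²` and `e_k A² = 0`. -/

open Submodule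

section

variable {F A ι : Type*} [Field F] [AddCommGroup A] [Module F A] {m : A →ₗ[F] A →ₗ[F] A}
  {e : Module.Basis ι F A}

theorem ppow_succ_eq_pow_smul {v : A} {t : F} (h : m (m v v) v = t • m v v) :
    ∀ k : ℕ, ppow m v (k + 1) = t ^ k • m v v
  | 0 => by simp [ppow]
  | k + 1 => by
    rw [ppow, ppow_succ_eq_pow_smul h k, map_smul, LinearMap.smul_apply, h, smul_smul, pow_succ]

theorem cube_eq_zero_of_nil {v : A} {t : F} (h : m (m v v) v = t • m v v)
    (hnil : ∃ k, ppow m v k = 0) : m (m v v) v = 0 := by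
  obtain ⟨_ | k, hk⟩ := hnil
  · simp [show v = 0 from hk]
  rw [ppow_succ_eq_pow_smul h, smul_eq_zero] at hk
  rcases hk with ht | hv
  · rw [h, (pow_eq_zero_iff'.1 ht).1, zero_smul]
  · rw [h, hv, smul_zero]

theorem mul_self_add_of_mul_eq_zero (hcomm : ∀ x y, m x y = m y x) {y v : A} (hyv : m y v = 0) :
    m (y + v) (y + v) = m y y + m v v := by
  simp [hyv, hcomm v y]

theorem mul_self_sub_of_mul_eq_zero (hcomm : ∀ x y, m x y = m y x) {y v : A} (hyv : m y v = 0) :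
    m (y - v) (y - v) = m y y + m v v := by
  simp [hyv, hcomm v y]

theorem sq_add_sq_mul_self_eq (hcomm : ∀ x y, m x y = m y x)
    (hpa : ∀ x, m (m x x) (m x x) = m (m (m x x) x) x) (h2 : (2 : F) ≠ 0) {y v : A}
    (hyv : m y v = 0) :
    m (m y y + m v v) (m y y + m v v) =
      m (m (m y y + m v v) y) y + m (m (m y y + m v v) v) v := by
  have hadd := hpa (y + v)
  have hsub := hpa (y - v)
  rw [mul_self_add_of_mul_eq_zero hcomm hyv] at hadd
  rw [mul_self_sub_of_mul_eq_zero hcomm hyv] at hsub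
  set S := m y y + m v v
  have : (2 : F) • (m S S - (m (m S y) y + m (m S v) v)) = 0 := by
    simp only [map_add, map_sub, LinearMap.add_apply, LinearMap.sub_apply] at hadd hsub
    linear_combination (norm := module) hadd + hsub
  exact sub_eq_zero.1 ((smul_eq_zero.1 this).resolve_left h2)

theorem spow_succ_le_iff {k : ℕ} {N : Submodule F A} :
    spow m (k + 1) ≤ N ↔ ∀ u ∈ spow m k, ∀ v, m u v ∈ N := by
  rw [spow, span_le]
  exact ⟨fun h u hu v => h ⟨u, hu, v, rfl⟩, by rintro h _ ⟨u, hu, v, rfl⟩; exact h u hu v⟩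

theorem spow_three_eq_bot (h : ∀ x y z w, m (m (m x y) z) w = 0) : spow m 3 = ⊥ := by
  have h1 : spow m 1 ≤ LinearMap.ker (m.compr₂ m) :=
    spow_succ_le_iff.2 fun u _ v => LinearMap.mem_ker.2 (by ext z w; exact h u v z w)
  have h2 : spow m 2 ≤ LinearMap.ker m := spow_succ_le_iff.2 fun u hu v =>
    LinearMap.mem_ker.2 (LinearMap.congr_fun (LinearMap.mem_ker.1 (h1 hu)) v)
  refine eq_bot_iff.2 <| spow_succ_le_iff.2 fun u hu v => ?_
  rw [LinearMap.mem_ker.1 (h2 hu), LinearMap.zero_apply]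
  exact zero_mem _

theorem eq_zero_of_smul_eq_zero_of_eq_smul {t : F} {z w : A} (h : t • z = 0) (hz : z = t • w) :
    z = 0 := by
  rcases eq_or_ne t 0 with rfl | ht
  · rw [hz, zero_smul]
  · exact (smul_eq_zero.1 h).resolve_left ht

theorem mul_basis_right (he : Pairwise fun i j => m (e i) (e j) = 0) (x : A) (r : ι) :
    m x (e r) = e.repr x r • m (e r) (e r) := by
  have : m.flip (e r) = (e.coord r).smulRight (m (e r) (e r)) := e.ext fun s => by
    rcases eq_or_ne s r with rfl | hsr
    · simp
    · simp [he hsr, hsr]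
  exact LinearMap.congr_fun this x

theorem mul_mem_span_sq (he : Pairwise fun i j => m (e i) (e j) = 0) (x y : A) :
    m x y ∈ span F (Set.range fun i => m (e i) (e i)) := by
  have : LinearMap.range (m x) ≤ span F (Set.range fun i => m (e i) (e i)) := by
    rw [LinearMap.range_eq_map, ← e.span_eq, map_span_le]
    rintro _ ⟨r, rfl⟩
    rw [mul_basis_right he]
    exact smul_mem _ _ (subset_span ⟨r, rfl⟩)
  exact this ⟨y, rfl⟩

theorem map_mul_eq_zero {M : Type*} [AddCommGroup M] [Module F M]
    (he : Pairwise fun i j => m (e i) (e j) = 0) (f : A →ₗ[F] M)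
    (hf : ∀ i, f (m (e i) (e i)) = 0) (x y : A) : f (m x y) = 0 :=
  have : span F (Set.range fun i => m (e i) (e i)) ≤ LinearMap.ker f :=
    span_le.2 <| by rintro _ ⟨i, rfl⟩; exact hf i
  this (mul_mem_span_sq he x y)

theorem mul_mul_eq_zero_of_sq_mul_basis (he : Pairwise fun i j => m (e i) (e j) = 0)
    (h : ∀ q p, m (m (e q) (e q)) (e p) = 0) (x y z : A) : m (m x y) z = 0 :=
  LinearMap.congr_fun (map_mul_eq_zero he m (fun q => e.ext fun p => by simpa using h q p) x y) z

theorem mul_mul_mul_eq_zero_of_sq_mul_basis_mul_basis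
    (he : Pairwise fun i j => m (e i) (e j) = 0)
    (h : ∀ q p r, m (m (m (e q) (e q)) (e p)) (e r) = 0) (x y z w : A) :
    m (m (m x y) z) w = 0 :=
  LinearMap.congr_fun₂ (map_mul_eq_zero he (m.compr₂ m)
    (fun q => e.ext fun p => e.ext fun r => by simpa using h q p r) x y) z w

theorem spow_one_le_span_sq (he : Pairwise fun i j => m (e i) (e j) = 0) :
    spow m 1 ≤ span F (Set.range fun i => m (e i) (e i)) :=
  spow_succ_le_iff.2 fun u _ v => mul_mem_span_sq he u v

theorem cube_basis_eq_zero (he : Pairwise fun i j => m (e i) (e j) = 0) {i : ι}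
    (hnil : ∃ k, ppow m (e i) k = 0) : m (m (e i) (e i)) (e i) = 0 :=
  cube_eq_zero_of_nil (mul_basis_right he _ i) hnil

theorem mul_basis_mul_basis_eq_zero (he : Pairwise fun i j => m (e i) (e j) = 0)
    (hcube : ∀ i, m (m (e i) (e i)) (e i) = 0) (x : A) (r : ι) : m (m x (e r)) (e r) = 0 := by
  rw [mul_basis_right he x r, map_smul, LinearMap.smul_apply, hcube, smul_zero]

theorem mul_mul_add_basis (he : Pairwise fun i j => m (e i) (e j) = 0)
    (hcube : ∀ i, m (m (e i) (e i)) (e i) = 0) (u : A) (p r : ι) :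
    m (m u (e p + e r)) (e p + e r) = m (m u (e p)) (e r) + m (m u (e r)) (e p) := by
  simp only [map_add, LinearMap.add_apply, mul_basis_mul_basis_eq_zero he hcube]
  abel

theorem mul_mul_mul_eq_zero (hcomm : ∀ x y, m x y = m y x)
    (he : Pairwise fun i j => m (e i) (e j) = 0) (hcube : ∀ i, m (m (e i) (e i)) (e i) = 0)
    (hpa : ∀ x, m (m x x) (m x x) = m (m (m x x) x) x) (h2 : (2 : F) ≠ 0) (x y z w : A) :
    m (m x y) (m z w) = 0 := by
  have hself : ∀ i, m (m (e i) (e i)) (m (e i) (e i)) = 0 := fun i => by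
    rw [hpa, hcube, map_zero, LinearMap.zero_apply]
  have hsq : ∀ i j, m (m (e i) (e i)) (m (e j) (e j)) = 0 := by
    intro i j
    rcases eq_or_ne i j with rfl | hij
    · exact hself i
    have h := sq_add_sq_mul_self_eq hcomm hpa h2 (he hij)
    rw [mul_basis_mul_basis_eq_zero he hcube, mul_basis_mul_basis_eq_zero he hcube, add_zero] at h
    simp only [map_add, LinearMap.add_apply, hself, zero_add, add_zero,
      hcomm (m (e j) (e j))] at h
    rw [← two_smul F] at h
    exact (smul_eq_zero.1 h).resolve_left h2
  refine map_mul_eq_zero he (m (m x y)) (fun j => ?_) z w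
  simpa using map_mul_eq_zero he (m.flip (m (e j) (e j))) (fun i => hsq i j) x y

theorem sq_mul_mul_self_add_swap_eq_zero (hcomm : ∀ x y, m x y = m y x)
    (he : Pairwise fun i j => m (e i) (e j) = 0) (hcube : ∀ i, m (m (e i) (e i)) (e i) = 0)
    (hpa : ∀ x, m (m x x) (m x x) = m (m (m x x) x) x) (h2 : (2 : F) ≠ 0) {p r : ι}
    (hpr : p ≠ r) :
    m (m (m (e r) (e r)) (e p)) (e r) + m (m (m (e p) (e p)) (e r)) (e p) = 0 := by
  have h := hpa (e p + e r)
  rw [mul_mul_mul_eq_zero hcomm he hcube hpa h2, mul_self_add_of_mul_eq_zero hcomm (he hpr),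
    mul_mul_add_basis he hcube] at h
  simpa only [map_add, LinearMap.add_apply, hcube, zero_add, add_zero] using h.symm

theorem sq_mul_mul_add_swap_eq_zero (hcomm : ∀ x y, m x y = m y x)
    (he : Pairwise fun i j => m (e i) (e j) = 0) (hcube : ∀ i, m (m (e i) (e i)) (e i) = 0)
    (hpa : ∀ x, m (m x x) (m x x) = m (m (m x x) x) x) (h2 : (2 : F) ≠ 0) {q p r : ι}
    (hpr : p ≠ r) (hqp : q ≠ p) (hqr : q ≠ r) :
    m (m (m (e q) (e q)) (e p)) (e r) + m (m (m (e q) (e q)) (e r)) (e p) = 0 := by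
  have hyv : m (e p + e r) (e q) = 0 := by
    rw [map_add, LinearMap.add_apply, he hqp.symm, he hqr.symm, add_zero]
  have h := sq_add_sq_mul_self_eq hcomm hpa h2 hyv
  rw [← mul_self_add_of_mul_eq_zero hcomm hyv, mul_mul_mul_eq_zero hcomm he hcube hpa h2,
    mul_basis_mul_basis_eq_zero he hcube, add_zero, mul_self_add_of_mul_eq_zero hcomm hyv,
    mul_self_add_of_mul_eq_zero hcomm (he hpr), mul_mul_add_basis he hcube] at h
  simp only [map_add, LinearMap.add_apply, hcube, zero_add, add_zero] at h
  linear_combination (norm := module)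
    -h - sq_mul_mul_self_add_swap_eq_zero hcomm he hcube hpa h2 hpr

theorem sq_mul_mul_self_eq_zero (hcomm : ∀ x y, m x y = m y x)
    (he : Pairwise fun i j => m (e i) (e j) = 0) (hcube : ∀ i, m (m (e i) (e i)) (e i) = 0)
    (hpa : ∀ x, m (m x x) (m x x) = m (m (m x x) x) x) (h2 : (2 : F) ≠ 0) {p r : ι}
    (hpr : p ≠ r) : m (m (m (e r) (e r)) (e p)) (e r) = 0 := by
  have hW : m (m (m (e p) (e p)) (e r)) (e p) = -m (m (m (e r) (e r)) (e p)) (e r) :=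
    eq_neg_of_add_eq_zero_right (sq_mul_mul_self_add_swap_eq_zero hcomm he hcube hpa h2 hpr)
  -- With `t` the `e_r`-coordinate of `e_p²`, the product is a multiple of `t`, and multiplying
  -- `hW` by `e_r` shows that `t` kills it.
  rw [mul_basis_right he (m (e p) (e p)) r, map_smul, LinearMap.smul_apply] at hW
  refine eq_zero_of_smul_eq_zero_of_eq_smul (t := e.repr (m (e p) (e p)) r)
    (w := e.repr (m (e r) (e r)) p • m (e r) (e r)) ?_ ?_
  · simpa [mul_basis_mul_basis_eq_zero he hcube] using congrArg (fun z => m z (e r)) hW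
  · rw [mul_basis_right he (m (e r) (e r)) p, map_smul, LinearMap.smul_apply,
      mul_basis_right he (m (e p) (e p)) r, smul_comm]

theorem sq_mul_mul_eq_zero (hcomm : ∀ x y, m x y = m y x)
    (he : Pairwise fun i j => m (e i) (e j) = 0) (hcube : ∀ i, m (m (e i) (e i)) (e i) = 0)
    (hpa : ∀ x, m (m x x) (m x x) = m (m (m x x) x) x) (h2 : (2 : F) ≠ 0) (q p r : ι) :
    m (m (m (e q) (e q)) (e p)) (e r) = 0 := by
  rcases eq_or_ne p r with rfl | hpr
  · exact mul_basis_mul_basis_eq_zero he hcube _ p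
  rcases eq_or_ne q r with rfl | hqr
  · exact sq_mul_mul_self_eq_zero hcomm he hcube hpa h2 hpr
  rcases eq_or_ne q p with rfl | hqp
  · rw [hcube, map_zero, LinearMap.zero_apply]
  -- With `t` the `e_p`-coordinate of `e_r²`: `t` kills the product by the previous lemma, and the
  -- swap relation exhibits the product as a multiple of `t`.
  have hpr' := sq_mul_mul_self_eq_zero hcomm he hcube hpa h2 hpr
  rw [mul_basis_right he (m (e r) (e r)) p, map_smul, LinearMap.smul_apply] at hpr'
  refine eq_zero_of_smul_eq_zero_of_eq_smul (t := e.repr (m (e r) (e r)) p)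
    (w := -(e.repr (m (e q) (e q)) r • m (e p) (e p))) ?_ ?_
  · rw [mul_basis_right he (m (e q) (e q)) p, map_smul, LinearMap.smul_apply, smul_comm, hpr',
      smul_zero]
  · rw [eq_neg_of_add_eq_zero_left (sq_mul_mul_add_swap_eq_zero hcomm he hcube hpa h2 hpr hqp hqr),
      mul_basis_right he (m (e q) (e q)) r, map_smul, LinearMap.smul_apply,
      mul_basis_right he (m (e r) (e r)) p, smul_comm, smul_neg]

theorem exists_cube_ne_zero (hcomm : ∀ x y, m x y = m y x)
    (he : Pairwise fun i j => m (e i) (e j) = 0) (hcube : ∀ i, m (m (e i) (e i)) (e i) = 0)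
    (h2 : (2 : F) ≠ 0) {q p : ι} (hqp : m (m (e q) (e q)) (e p) ≠ 0) :
    ∃ a : A, m (m a a) a ≠ 0 := by
  have hne : q ≠ p := by rintro rfl; exact hqp (hcube q)
  by_contra! h
  have hadd := h (e q + e p)
  have hsub := h (e q - e p)
  rw [mul_self_add_of_mul_eq_zero hcomm (he hne)] at hadd
  rw [mul_self_sub_of_mul_eq_zero hcomm (he hne)] at hsub
  have : (2 : F) • m (m (e q) (e q)) (e p) = 0 := by
    simp only [map_add, map_sub, LinearMap.add_apply, hcube] at hadd hsub
    linear_combination (norm := module) hadd - hsub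
  exact hqp ((smul_eq_zero.1 this).resolve_left h2)

theorem exists_not_mem_spow_one_mul_eq_zero (hcomm : ∀ x y, m x y = m y x)
    (he : Pairwise fun i j => m (e i) (e j) = 0)
    (h : ∀ q p r, m (m (m (e q) (e q)) (e p)) (e r) = 0) {k i : ι}
    (hki : m (m (e k) (e k)) (e i) ≠ 0) :
    ∃ y : A, y ∉ spow m 1 ∧ ∀ z ∈ spow m 1, m y z = 0 := by
  have hrow : ∀ q, e.repr (m (e q) (e q)) k = 0 := fun q => by
    have := h q k i
    rw [mul_basis_right he _ k, map_smul, LinearMap.smul_apply, smul_eq_zero] at this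
    exact this.resolve_right hki
  have hcoord : span F (Set.range fun q => m (e q) (e q)) ≤ LinearMap.ker (e.coord k) :=
    span_le.2 <| by rintro _ ⟨q, rfl⟩; exact hrow q
  have hann : span F (Set.range fun q => m (e q) (e q)) ≤ LinearMap.ker (m (e k)) :=
    span_le.2 <| by
      rintro _ ⟨q, rfl⟩
      rw [SetLike.mem_coe, LinearMap.mem_ker, hcomm, mul_basis_right he, hrow, zero_smul]
  refine ⟨e k, fun hk => ?_, fun z hz => hann (spow_one_le_span_sq he hz)⟩
  simpa using hcoord (spow_one_le_span_sq he hk)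

end

/-- a finite-dimensional nil power-associative evolution algebra over a
field of characteristic ≠ 2 which is not associative has nil-index 4 (`x⁴ = 0` always
and `a³ ≠ 0` for some `a`), satisfies `A⁴ = 0`, and there is `y ∉ A²` with `y·A² = 0`. -/
theorem nil_pa_nonassoc_evolution_algebra_structure
    (F : Type*) [Field F] (h2 : (2 : F) ≠ 0)
    (A : Type*) [AddCommGroup A] [Module F A]
    (m : A →ₗ[F] A →ₗ[F] A) (hcomm : ∀ x y : A, m x y = m y x)
    (hev : ∃ (n : ℕ) (e : Module.Basis (Fin n) F A),
      ∀ i j : Fin n, i ≠ j → m (e i) (e j) = 0)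
    (hnil : ∀ a : A, ∃ k : ℕ, ppow m a k = 0)
    (hpa : ∀ (a : A) (i j : ℕ),
      m (ppow m a i) (ppow m a j) = ppow m a (i + j + 1))
    (hnotassoc : ¬ ∀ x y z : A, m (m x y) z = m x (m y z)) :
    (∀ x : A, ppow m x 3 = 0) ∧
    (∃ a : A, ppow m a 2 ≠ 0) ∧
    spow m 3 = ⊥ ∧
    (∃ y : A, y ∉ spow m 1 ∧ ∀ z ∈ spow m 1, m y z = 0) := by
  obtain ⟨n, e, he⟩ := hev
  replace he : Pairwise fun i j => m (e i) (e j) = 0 := he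
  have hcube : ∀ i, m (m (e i) (e i)) (e i) = 0 := fun i => cube_basis_eq_zero he (hnil (e i))
  have hkey := sq_mul_mul_eq_zero hcomm he hcube (fun x => hpa x 1 1) h2
  have hfour := mul_mul_mul_eq_zero_of_sq_mul_basis_mul_basis he hkey
  obtain ⟨q, p, hqp⟩ : ∃ q p, m (m (e q) (e q)) (e p) ≠ 0 := by
    by_contra! h
    have h3 := mul_mul_eq_zero_of_sq_mul_basis he h
    exact hnotassoc fun x y z => by rw [h3, hcomm x, h3]
  exact ⟨fun x => hfour x x x x, exists_cube_ne_zero hcomm he hcube h2 hqp,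
    spow_three_eq_bot hfour, exists_not_mem_spow_one_mul_eq_zero hcomm he hkey hqp⟩
end
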